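/- Let G be a finite connected simple graph of order n ≥ 4. Then G is isomorphic to the star graph K_{1,n−1} if and only if γ(M(G)) = n − 1, where γ denotes the domination number. -/

import Mathlib

/-- `S` is a dominating set of the graph `H`. -/
def IsDomSet {V : Type*} (H : SimpleGraph V) (S : Set V) : Prop :=
  ∀ v : V, v ∈ S ∨ ∃ s ∈ S, H.Adj v s

/-- The domination number of a graph `H`. -/
noncomputable def domNum {V : Type*} (H : SimpleGraph V) : ℕ :=
  sInf {k : ℕ | ∃ S : Set V, IsDomSet H S ∧ S.ncard = k}

/-- The middle graph `M(G)` of a graph `G`: its vertices are the vertices and edges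
of `G`; a vertex is adjacent to the edges incident to it, and two edges are adjacent
iff they are distinct and share an endpoint. -/
def middleGraph {V : Type*} (G : SimpleGraph V) : SimpleGraph (V ⊕ G.edgeSet) where
  Adj x y :=
    match x, y with
    | Sum.inl _, Sum.inl _ => False
    | Sum.inl v, Sum.inr e => v ∈ (e : Sym2 V)
    | Sum.inr e, Sum.inl v => v ∈ (e : Sym2 V)
    | Sum.inr e, Sum.inr f => e ≠ f ∧ ∃ v, v ∈ (e : Sym2 V) ∧ v ∈ (f : Sym2 V)
  symm := by
    refine ⟨?_⟩
    rintro (v | e) (w | f) h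
    · exact h.elim
    · exact h
    · exact h
    · exact ⟨Ne.symm h.1, h.2.imp fun v hv => ⟨hv.2, hv.1⟩⟩
  loopless := by
    refine ⟨?_⟩
    rintro (v | e) h
    · exact h.elim
    · exact h.1 rfl

/-- The star graph `K_{1,n}`: the vertex `0` is the center, adjacent to the `n` leaves. -/
def starGraph (n : ℕ) : SimpleGraph (Fin (n + 1)) where
  Adj x y := x ≠ y ∧ (x = 0 ∨ y = 0)
  symm := by
    refine ⟨?_⟩
    rintro x y ⟨h1, h2⟩
    exact ⟨h1.symm, h2.symm⟩
  loopless := by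
    refine ⟨?_⟩
    rintro x ⟨h1, _⟩
    exact h1 rfl

/-!
If `G` is a star with centre `c`, its `n - 1` leaves are pairwise non-adjacent, and in `M(G)`
non-adjacent vertices of `G` have disjoint closed neighbourhoods, so `γ(M(G)) ≥ n - 1`; the
`n - 1` edges dominate `M(G)`. If `G` is not a star, then, being connected with at least four
vertices, it has two disjoint edges: pairwise meeting edges either share a vertex or form a
triangle, and a further vertex has no room for an edge. Two disjoint edges together with the
`n - 4` vertices they miss dominate `M(G)`, so `γ(M(G)) ≤ n - 2`.
-/

open Set

section Domination

variable {W : Type*} {H : SimpleGraph W}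

lemma domNum_le_ncard {S : Set W} (hS : IsDomSet H S) : domNum H ≤ S.ncard :=
  Nat.sInf_le ⟨S, hS, rfl⟩

/-- A dominating set meets every closed neighbourhood `insert v (H.neighborSet v)`, hence meets
pairwise disjoint ones in distinct points. -/
lemma ncard_le_domNum_of_pairwiseDisjoint [Finite W] {T : Set W}
    (hT : T.PairwiseDisjoint fun v => insert v (H.neighborSet v)) : T.ncard ≤ domNum H := by
  refine le_csInf ⟨_, univ, fun v => Or.inl trivial, rfl⟩ ?_
  rintro _ ⟨S, hS, rfl⟩
  have hmeet : ∀ v, ∃ s ∈ S, s ∈ insert v (H.neighborSet v) := fun v =>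
    (hS v).elim (fun hv => ⟨v, hv, mem_insert v _⟩) fun ⟨s, hs, hvs⟩ => ⟨s, hs, Or.inr hvs⟩
  choose f hfS hfN using hmeet
  exact ncard_le_ncard_of_injOn f (fun v _ => hfS v)
    fun v hv w hw hvw => hT.elim hv hw (not_disjoint_iff.2 ⟨f v, hfN v, hvw ▸ hfN w⟩)

end Domination

section MiddleGraph

variable {V : Type*} {G : SimpleGraph V}

lemma isDomSet_middleGraph_of_cover (U : Set V) (F : Set G.edgeSet)
    (hcover : ∀ v, v ∈ U ∨ ∃ f ∈ F, v ∈ (f : Sym2 V)) :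
    IsDomSet (middleGraph G) (Sum.inl '' U ∪ Sum.inr '' F) := by
  rintro (v | e)
  · rcases hcover v with hv | ⟨f, hf, hvf⟩
    · exact Or.inl (Or.inl (mem_image_of_mem _ hv))
    · exact Or.inr ⟨Sum.inr f, Or.inr (mem_image_of_mem _ hf), hvf⟩
  · obtain ⟨v, hv⟩ : ∃ v, v ∈ (e : Sym2 V) := ⟨_, Sym2.out_fst_mem _⟩
    rcases hcover v with hvU | ⟨f, hf, hvf⟩
    · exact Or.inr ⟨Sum.inl v, Or.inl (mem_image_of_mem _ hvU), hv⟩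
    · by_cases hef : e = f
      · exact Or.inl (Or.inr ⟨f, hf, hef ▸ rfl⟩)
      · exact Or.inr ⟨Sum.inr f, Or.inr (mem_image_of_mem _ hf), hef, v, hv, hvf⟩

lemma domNum_middleGraph_le_of_cover (U : Set V) (F : Set G.edgeSet)
    (hcover : ∀ v, v ∈ U ∨ ∃ f ∈ F, v ∈ (f : Sym2 V)) :
    domNum (middleGraph G) ≤ U.ncard + F.ncard :=
  calc domNum (middleGraph G) ≤ (Sum.inl '' U ∪ Sum.inr '' F).ncard :=
        domNum_le_ncard (isDomSet_middleGraph_of_cover U F hcover)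
    _ ≤ (Sum.inl '' U).ncard + (Sum.inr '' F).ncard := ncard_union_le _ _
    _ = U.ncard + F.ncard := by
        rw [ncard_image_of_injective _ Sum.inl_injective,
          ncard_image_of_injective _ Sum.inr_injective]

/-- In `M(G)` the closed neighbourhoods of two vertices of `G` can only meet in an edge joining
them. -/
lemma ncard_le_domNum_middleGraph_of_isIndepSet [Finite V] {T : Set V} (hT : G.IsIndepSet T) :
    T.ncard ≤ domNum (middleGraph G) := by
  rw [← ncard_image_of_injective T Sum.inl_injective]
  refine ncard_le_domNum_of_pairwiseDisjoint ?_
  rintro _ ⟨v, hv, rfl⟩ _ ⟨w, hw, rfl⟩ hne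
  have hvw : v ≠ w := fun h => hne (h ▸ rfl)
  refine disjoint_left.2 fun x hxv hxw => ?_
  rcases x with u | e
  · have huv : u = v := by simpa [middleGraph] using hxv
    have huw : u = w := by simpa [middleGraph] using hxw
    exact hvw (huv.symm.trans huw)
  · have hvwe : v ∈ (e : Sym2 V) ∧ w ∈ (e : Sym2 V) :=
      ⟨by simpa [middleGraph] using hxv, by simpa [middleGraph] using hxw⟩
    rw [Sym2.mem_and_mem_iff hvw] at hvwe
    exact hT hv hw hvw (G.mem_edgeSet.1 (hvwe ▸ e.2))

end MiddleGraph

section Star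

variable {V W : Type*} {G : SimpleGraph V} {H : SimpleGraph W} {c : V}

def IsStarAt (G : SimpleGraph V) (c : V) : Prop :=
  ∀ x y, G.Adj x y ↔ x ≠ y ∧ (x = c ∨ y = c)

lemma isStarAt_starGraph (n : ℕ) : IsStarAt (starGraph n) 0 := fun _ _ => Iff.rfl

lemma IsStarAt.of_iso {d : W} (φ : G ≃g H) (hH : IsStarAt H d) : IsStarAt G (φ.symm d) := by
  intro x y
  rw [← φ.map_adj_iff, hH, φ.injective.ne_iff, φ.eq_symm_apply, φ.eq_symm_apply]

def IsStarAt.iso {d : W} (hG : IsStarAt G c) (hH : IsStarAt H d) (e : V ≃ W) (hc : e c = d) :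
    G ≃g H where
  toEquiv := e
  map_rel_iff' {x y} := by
    rw [hH, hG, e.injective.ne_iff, ← hc, e.apply_eq_iff_eq, e.apply_eq_iff_eq]

lemma nonempty_iso_starGraph_iff [Fintype V] {m : ℕ} (hV : Fintype.card V = m + 1) :
    Nonempty (G ≃g starGraph m) ↔ ∃ c, IsStarAt G c := by
  refine ⟨fun ⟨φ⟩ => ⟨_, (isStarAt_starGraph m).of_iso φ⟩, fun ⟨c, hc⟩ => ?_⟩
  let e := Fintype.equivFinOfCardEq hV
  exact ⟨hc.iso (isStarAt_starGraph m) (e.trans (Equiv.swap (e c) 0)) (Equiv.swap_apply_left _ _)⟩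

lemma IsStarAt.exists_adj [Nontrivial V] (hG : IsStarAt G c) (v : V) : ∃ w, G.Adj v w := by
  by_cases hv : v = c
  · obtain ⟨w, hw⟩ := exists_ne v
    exact ⟨w, (hG v w).2 ⟨hw.symm, Or.inl hv⟩⟩
  · exact ⟨c, (hG v c).2 ⟨hv, Or.inr rfl⟩⟩

lemma IsStarAt.isIndepSet_compl (hG : IsStarAt G c) : G.IsIndepSet {c}ᶜ :=
  fun x hx y hy _ hadj => ((hG x y).1 hadj).2.elim hx hy

lemma IsStarAt.edgeSet_subset (hG : IsStarAt G c) : G.edgeSet ⊆ (fun v => s(c, v)) '' {c}ᶜ := by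
  intro e he
  induction e using Sym2.ind with
  | _ x y =>
    obtain ⟨hxy, rfl | rfl⟩ := (hG x y).1 he
    · exact ⟨y, hxy.symm, rfl⟩
    · exact ⟨x, hxy, Sym2.eq_swap⟩

lemma IsStarAt.domNum_middleGraph [Finite V] [Nontrivial V] (hG : IsStarAt G c) :
    domNum (middleGraph G) = Nat.card V - 1 := by
  have hleaves : ({c}ᶜ : Set V).ncard = Nat.card V - 1 := by
    rw [ncard_compl, ncard_singleton]
  refine le_antisymm ?_ (hleaves ▸ ncard_le_domNum_middleGraph_of_isIndepSet hG.isIndepSet_compl)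
  have hcover : ∀ v, v ∈ (∅ : Set V) ∨ ∃ f ∈ (univ : Set G.edgeSet), v ∈ (f : Sym2 V) := by
    intro v
    obtain ⟨w, hvw⟩ := hG.exists_adj v
    exact Or.inr ⟨⟨s(v, w), hvw⟩, mem_univ _, Sym2.mem_mk_left v w⟩
  calc domNum (middleGraph G) ≤ (∅ : Set V).ncard + (univ : Set G.edgeSet).ncard :=
        domNum_middleGraph_le_of_cover ∅ univ hcover
    _ = G.edgeSet.ncard := by rw [ncard_empty, zero_add, ncard_univ, Nat.card_coe_set_eq]
    _ ≤ ((fun v => s(c, v)) '' {c}ᶜ).ncard := ncard_le_ncard hG.edgeSet_subset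
    _ ≤ Nat.card V - 1 := hleaves ▸ ncard_image_le

lemma IsStarAt.of_forall_adj {c : V} (hc : ∀ x y, G.Adj x y → x = c ∨ y = c)
    (hnbr : ∀ v, ∃ w, G.Adj v w) : IsStarAt G c := by
  have hadj_c : ∀ v, v ≠ c → G.Adj v c := fun v hv =>
    let ⟨w, hvw⟩ := hnbr v
    (hc v w hvw).resolve_left hv ▸ hvw
  refine fun x y => ⟨fun h => ⟨h.ne, hc x y h⟩, ?_⟩
  rintro ⟨hxy, rfl | rfl⟩
  · exact (hadj_c y hxy.symm).symm
  · exact hadj_c x hxy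

end Star

section TwoDisjointEdges

variable {V : Type*} {G : SimpleGraph V}

lemma domNum_middleGraph_add_two_le [Finite V] {a b x y : V} (hab : G.Adj a b) (hxy : G.Adj x y)
    (hax : a ≠ x) (hay : a ≠ y) (hbx : b ≠ x) (hby : b ≠ y) :
    domNum (middleGraph G) + 2 ≤ Nat.card V := by
  set A : Set V := {a, b, x, y}
  have hA : A.ncard = 4 :=
    ncard_eq_four.2 ⟨a, b, x, y, hab.ne, hax, hay, hbx, hby, hxy.ne, rfl⟩
  have hcover : ∀ v, v ∈ Aᶜ ∨ ∃ f ∈ ({⟨s(a, b), hab⟩, ⟨s(x, y), hxy⟩} : Set G.edgeSet),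
      v ∈ (f : Sym2 V) := by
    intro v
    by_cases hv : v ∈ A
    · refine Or.inr ?_
      rcases hv with rfl | rfl | rfl | rfl
      · exact ⟨_, Or.inl rfl, Sym2.mem_mk_left _ _⟩
      · exact ⟨_, Or.inl rfl, Sym2.mem_mk_right _ _⟩
      · exact ⟨_, Or.inr rfl, Sym2.mem_mk_left _ _⟩
      · exact ⟨_, Or.inr rfl, Sym2.mem_mk_right _ _⟩
    · exact Or.inl hv
  have hF := ncard_insert_le (⟨s(a, b), hab⟩ : G.edgeSet) {⟨s(x, y), hxy⟩}
  have hAc := ncard_compl_add_ncard A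
  have := domNum_middleGraph_le_of_cover _ _ hcover
  rw [ncard_singleton] at hF
  omega

end TwoDisjointEdges

section PairwiseMeetingEdges

variable {V : Type*} {G : SimpleGraph V}

def EdgesPairwiseMeet (G : SimpleGraph V) : Prop :=
  ∀ a b x y, G.Adj a b → G.Adj x y → a = x ∨ a = y ∨ b = x ∨ b = y

lemma EdgesPairwiseMeet.exists_triangle (hmeet : EdgesPairwiseMeet G) {a b : V}
    (hab : G.Adj a b) (hno : ∀ c, ∃ x y, G.Adj x y ∧ x ≠ c ∧ y ≠ c) :
    ∃ z, G.Adj a z ∧ G.Adj b z := by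
  obtain ⟨p, q, hpq, hpa, hqa⟩ := hno a
  -- `pq` avoids `a`, so it meets `ab` in `b`
  obtain ⟨z, hbz, hza⟩ : ∃ z, G.Adj b z ∧ z ≠ a := by
    rcases hmeet a b p q hab hpq with rfl | rfl | rfl | rfl
    · exact absurd rfl hpa
    · exact absurd rfl hqa
    · exact ⟨q, hpq, hqa⟩
    · exact ⟨p, hpq.symm, hpa⟩
  obtain ⟨r, s, hrs, hrb, hsb⟩ := hno b
  -- `rs` avoids `b`, so it meets `ab` in `a` and `bz` in `z`
  refine ⟨z, ?_, hbz⟩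
  have har : a = r ∨ a = s := by grind [hmeet a b r s hab hrs]
  have hzr : z = r ∨ z = s := by grind [hmeet b z r s hbz hrs]
  rcases har with rfl | rfl <;> rcases hzr with rfl | rfl <;>
    first | exact hrs | exact hrs.symm | exact absurd rfl hza

lemma EdgesPairwiseMeet.mem_of_adj_of_triangle (hmeet : EdgesPairwiseMeet G) {a b z d t : V}
    (hab : G.Adj a b) (haz : G.Adj a z) (hbz : G.Adj b z) (hdt : G.Adj d t) :
    d = a ∨ d = b ∨ d = z := by
  have := hab.ne
  have := haz.ne
  have := hbz.ne
  grind [hmeet d t a b hdt hab, hmeet d t a z hdt haz, hmeet d t b z hdt hbz]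

lemma EdgesPairwiseMeet.exists_isStarAt [Finite V] (hmeet : EdgesPairwiseMeet G)
    (hV : 4 ≤ Nat.card V) (hnbr : ∀ v, ∃ w, G.Adj v w) : ∃ c, IsStarAt G c := by
  by_contra! hstar
  have hno : ∀ c, ∃ x y, G.Adj x y ∧ x ≠ c ∧ y ≠ c := fun c => by
    by_contra! hc
    exact hstar c (.of_forall_adj (fun x y h => or_iff_not_imp_left.2 (hc x y h)) hnbr)
  obtain ⟨a⟩ : Nonempty V := (Nat.card_pos_iff.1 (by omega)).1
  obtain ⟨b, hab⟩ := hnbr a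
  obtain ⟨z, haz, hbz⟩ := hmeet.exists_triangle hab hno
  obtain ⟨d, hd⟩ : ∃ d, d ∉ ({a, b, z} : Set V) := by
    refine (ne_univ_iff_exists_notMem _).1 fun h => ?_
    have := ncard_insert_le a {b, z}
    have := ncard_insert_le b {z}
    rw [h, ncard_univ, ncard_singleton] at *
    omega
  obtain ⟨t, hdt⟩ := hnbr d
  exact hd (hmeet.mem_of_adj_of_triangle hab haz hbz hdt)

end PairwiseMeetingEdges

/-- A connected graph `G` of order `n ≥ 4` is isomorphic to the star
`K_{1,n-1}` if and only if `γ(M(G)) = n - 1`. -/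
theorem star_iff_domNum_middle_eq {V : Type*} [Fintype V] (G : SimpleGraph V) (n : ℕ)
    (hord : Fintype.card V = n) (hn : 4 ≤ n) (hconn : G.Connected) :
    Nonempty (G ≃g starGraph (n - 1)) ↔ domNum (middleGraph G) = n - 1 := by
  have hcard : Nat.card V = n := Nat.card_eq_fintype_card.trans hord
  have : Nontrivial V := Finite.one_lt_card_iff_nontrivial.1 (by omega)
  have hnbr := hconn.preconnected.exists_adj_of_nontrivial
  rw [nonempty_iso_starGraph_iff (by omega : Fintype.card V = n - 1 + 1)]
  refine ⟨fun ⟨c, hc⟩ => hcard ▸ hc.domNum_middleGraph, fun h => ?_⟩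
  by_contra hstar
  have hdisj : ¬ EdgesPairwiseMeet G := fun hmeet => hstar (hmeet.exists_isStarAt (by omega) hnbr)
  simp only [EdgesPairwiseMeet, not_forall, not_or] at hdisj
  obtain ⟨a, b, x, y, hab, hxy, hax, hay, hbx, hby⟩ := hdisj
  have := domNum_middleGraph_add_two_le hab hxy hax hay hbx hby
  omega
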